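/- arXiv:1405.1295 — 2 statements merged into one kernel-verified Lean document; each statement's English description precedes it below -/
import Mathlib

section
/- Let T be a finite rooted tree entailing a property that depends only on (i) the multiset of labels occurring in T up to threshold counting with cap M, and (ii) local parent/child label constraints. If two nodes n1, n2 on a root-to-leaf path of T carry identical labels (including identical capped counter values), with n1 an ancestor of n2, then the tree T' obtained by deleting the path strictly between n1 and n2 (grafting the subtrees of n2 onto n1) still satisfies: for every node label, its capped count in T' at the root equals its capped count in T at the root restricted to thresholds below M. -/
/-- Finite binary trees over a label set `L`. -/
inductive BTree (L : Type) : Type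
  | nil : BTree L
  | node : L → BTree L → BTree L → BTree L

/-- Capped bottom-up counter: `min (M, local bit + left + right)`. -/
def BTree.ccount {L : Type} (M : ℕ) (P : L → Prop) [DecidablePred P] : BTree L → ℕ
  | .nil => 0
  | .node l t1 t2 => min M ((if P l then 1 else 0) + t1.ccount M P + t2.ccount M P)

/-- One-hole tree contexts: a binary tree with a single hole. -/
inductive Ctx (L : Type) : Type
  | hole : Ctx L
  | left : L → Ctx L → BTree L → Ctx L
  | right : L → BTree L → Ctx L → Ctx L

/-- Filling the hole of a context with a tree. -/
def Ctx.fill {L : Type} : Ctx L → BTree L → BTree L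
  | .hole, t => t
  | .left l c r, t => BTree.node l (c.fill t) r
  | .right l s c, t => BTree.node l s (c.fill t)


lemma fill_ccount_congr {L : Type} (M : ℕ) (P : L → Prop) [DecidablePred P]
    (C : Ctx L) (a b : BTree L) (h : a.ccount M P = b.ccount M P) :
    (C.fill a).ccount M P = (C.fill b).ccount M P := by
  induction C with
  | hole => exact h
  | left l c r ih => simp [Ctx.fill, BTree.ccount, ih]
  | right l s c ih => simp [Ctx.fill, BTree.ccount, ih]

/-- Pruning preserves capped threshold tests: let `T = C[D[t2]]` be a tree in which
the node `n1` (whose subtree is `D[t2]`) is an ancestor of the node `n2` (whose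
subtree is `t2`) on a root-to-leaf path, and suppose `n1` and `n2` carry identical
capped counter values for the predicate `P` with cap `M`. Then the tree
`T' = C[t2]` obtained by deleting the path strictly between `n1` and `n2`
(grafting the subtrees of `n2` onto `n1`) satisfies: for every threshold `k < M`,
the capped count at the root of `T'` exceeds `k` iff the capped count at the root
of `T` exceeds `k`. -/
theorem pruning_preserves_capped_counts {L : Type} (M : ℕ) (hM : 1 ≤ M)
    (P : L → Prop) [DecidablePred P] (C D : Ctx L) (t2 : BTree L)
    (heq : (D.fill t2).ccount M P = t2.ccount M P) :
    ∀ k < M, ((C.fill t2).ccount M P > k ↔ (C.fill (D.fill t2)).ccount M P > k) := by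
  intro k hk
  rw [fill_ccount_congr M P C t2 (D.fill t2) heq.symm]
end

section
/- Let T be a finite binary tree and let φ, ψ be decidable predicates on its nodes. Suppose the set of nodes satisfying a fresh marker predicate o is exactly {n0}. Then the number of children of n0 satisfying φ exceeds k if and only if the number of nodes m in T such that (φ holds at m and the parent of m satisfies o) exceeds k. -/
/-- Correctness of reducing local (graded) counting to global counting via a unique
nominal: in a finite tree `T` with child relation `child`, if the marker predicate
`o` holds at exactly one node `n0`, then the number of children of `n0` satisfying
`φ` exceeds `k` iff the number of nodes `m` in `T` such that `φ` holds at `m` and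
the parent of `m` satisfies `o` exceeds `k`. -/
theorem graded_via_nominal {N : Type} [Fintype N]
    (child : N → N → Prop) (o φ : N → Prop) (n0 : N) (k : ℕ)
    (ho : {n | o n} = {n0}) :
    {m | child n0 m ∧ φ m}.ncard > k ↔
      {m | φ m ∧ ∃ p, child p m ∧ o p}.ncard > k := by
  have h : ∀ p, o p ↔ p = n0 := fun p => Set.ext_iff.mp ho p
  have : {m | child n0 m ∧ φ m} = {m | φ m ∧ ∃ p, child p m ∧ o p} := by
    ext m
    simp only [Set.mem_setOf_eq, h]
    constructor
    · rintro ⟨hc, hφ⟩; exact ⟨hφ, n0, hc, rfl⟩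
    · rintro ⟨hφ, p, hc, rfl⟩; exact ⟨hc, hφ⟩
  rw [this]
end
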